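/- arXiv:2412.10686 — 6 statements merged into one kernel-verified Lean document; each statement's English description precedes it below -/
import Mathlib

section
/- Let N ≥ 1 and let B : Fin N → Set ℝ² be a family of sets. Let f : [0,1] → ℝ² be a continuous path with f 0 = 0 such that for every i there exists t ∈ [0,1] with f t ∈ B i. Then there exist points p : Fin N → ℝ² with p i ∈ B i for all i, and a permutation σ of Fin N, such that ‖p (σ 0)‖ + ∑_{i=1}^{N−1} dist (p (σ (i−1))) (p (σ i)) ≤ eVariationOn f (Set.Icc 0 1). (Thus the discrete polyline objective L_N through one escape point per rotated boundary, in some visiting order, is a lower bound for the length of any escape path.) -/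
open Fin.NatCast

/-- The discrete polyline objective through one escape point per rotated boundary, in some
visiting order, is a lower bound for the length of any escape path. -/
theorem discrete_objective_le_path_length
    (N : ℕ) (B : Fin (N + 1) → Set (EuclideanSpace ℝ (Fin 2)))
    (f : ℝ → EuclideanSpace ℝ (Fin 2))
    (hf : ContinuousOn f (Set.Icc 0 1)) (hf0 : f 0 = 0)
    (hmeet : ∀ i : Fin (N + 1), ∃ t ∈ Set.Icc (0:ℝ) 1, f t ∈ B i) :
    ∃ (p : Fin (N + 1) → EuclideanSpace ℝ (Fin 2)) (σ : Equiv.Perm (Fin (N + 1))),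
      (∀ i, p i ∈ B i) ∧
      ENNReal.ofReal (‖p (σ 0)‖ +
          ∑ i ∈ Finset.range N, dist (p (σ (i : Fin (N + 1)))) (p (σ ((i + 1 : ℕ) : Fin (N + 1)))))
        ≤ eVariationOn f (Set.Icc 0 1) := by
  choose t ht hB using hmeet
  set σ : Equiv.Perm (Fin (N + 1)) := Tuple.sort t with hσdef
  have hσ : Monotone (t ∘ σ) := Tuple.monotone_sort t
  refine ⟨fun i => f (t i), σ, hB, ?_⟩
  set u : ℕ → ℝ := fun k => if k = 0 then 0 else t (σ ⟨min (k - 1) N, by omega⟩) with hu_def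
  have hu : Monotone u := by
    apply monotone_nat_of_le_succ
    intro k
    match k with
    | 0 =>
      simp only [u]
      exact (ht (σ ⟨min 0 N, by omega⟩)).1
    | k + 1 =>
      simp only [u]
      exact hσ (show (⟨min k N, by omega⟩ : Fin (N+1)) ≤ ⟨min (k+1) N, by omega⟩ by
        simp only [Fin.mk_le_mk]; omega)
  have hus : ∀ i, u i ∈ Set.Icc (0:ℝ) 1 := by
    intro i
    by_cases h : i = 0
    · simp [u, h]
    · simp only [u, if_neg h]; exact ht _
  have key := eVariationOn.sum_le (f := f) (n := N + 1) hu hus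
  refine le_trans ?_ key
  have hsplit :
      ∑ i ∈ Finset.range (N + 1), edist (f (u (i + 1))) (f (u i))
        = (∑ i ∈ Finset.range N, edist (f (u (i + 2))) (f (u (i + 1))))
          + edist (f (u 1)) (f (u 0)) := by
    exact Finset.sum_range_succ' _ N
  rw [hsplit]
  have h0 : u 0 = 0 := rfl
  have h1 : u 1 = t (σ 0) := by
    simp only [u]
    norm_num
  have hterm : ∀ i ∈ Finset.range N,
      edist (f (u (i + 2))) (f (u (i + 1)))
        = ENNReal.ofReal (dist (f (t (σ (i : Fin (N + 1))))) (f (t (σ ((i + 1 : ℕ) : Fin (N + 1)))))) := by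
    intro i hi
    simp only [Finset.mem_range] at hi
    have e1 : u (i + 2) = t (σ ((i + 1 : ℕ) : Fin (N + 1))) := by
      simp only [u, if_neg (Nat.succ_ne_zero _)]
      congr 2
      ext
      rw [Fin.val_cast_of_lt (show i + 1 < N + 1 by omega)]
      show min (i + 2 - 1) N = i + 1
      omega
    have e2 : u (i + 1) = t (σ ((i : ℕ) : Fin (N + 1))) := by
      simp only [u, if_neg (Nat.succ_ne_zero _)]
      congr 2
      ext
      rw [Fin.val_cast_of_lt (show i < N + 1 by omega)]
      show min (i + 1 - 1) N = i
      omega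
    rw [e1, e2, edist_comm, edist_dist]
  rw [Finset.sum_congr rfl hterm, h0, h1, hf0, edist_comm, edist_dist, dist_zero_left,
    ENNReal.ofReal_add (by positivity) (by positivity),
    ENNReal.ofReal_sum_of_nonneg (fun i _ => dist_nonneg)]
  exact le_of_eq (add_comm _ _)
end

section
/- Let C ⊆ ℝ² be a compact connected set with 0 ∈ C. Then C meets every line at distance 1 from the origin — i.e., for every unit vector u ∈ ℝ² there exists p ∈ C with ⟪p, u⟫ = 1 — if and only if the closed unit disk is contained in the convex hull of C. (Isbell's equivalence: 'the path C meets every tangent to the unit circle about p' iff 'the convex hull of C contains the circle'.) -/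
open scoped RealInnerProductSpace


lemma aux_isCompact_convexHull {s : Set (EuclideanSpace ℝ (Fin 2))} (hs : IsCompact s)
    (hne : s.Nonempty) : IsCompact (convexHull ℝ s) := by
  classical
  obtain ⟨c, hc⟩ := hne
  let g : (Fin 3 → ℝ) × (Fin 3 → EuclideanSpace ℝ (Fin 2)) → EuclideanSpace ℝ (Fin 2) :=
    fun wp => ∑ i, wp.1 i • wp.2 i
  have hgc : Continuous g := by
    apply continuous_finset_sum
    intro i _
    exact ((continuous_apply i).comp continuous_fst).smul
      ((continuous_apply i).comp continuous_snd)
  have hK : IsCompact ((stdSimplex ℝ (Fin 3)) ×ˢ (Set.univ.pi fun _ : Fin 3 => s)) :=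
    IsCompact.prod (isCompact_stdSimplex (𝕜 := ℝ) (ι := Fin 3)) (isCompact_univ_pi fun _ => hs)
  have himg : convexHull ℝ s
      = g '' ((stdSimplex ℝ (Fin 3)) ×ˢ (Set.univ.pi fun _ : Fin 3 => s)) := by
    apply Set.Subset.antisymm
    · intro x hx
      obtain ⟨ι, hfin, z, w, hzs, hai, hwpos, hwsum, hcomb⟩ :=
        eq_pos_convex_span_of_mem_convexHull hx
      have hcard : Fintype.card ι ≤ 3 := by
        have h1 := hai.card_le_finrank_succ
        have h2 : Module.finrank ℝ (vectorSpan ℝ (Set.range z)) ≤ 2 := by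
          have h3 := Submodule.finrank_le (vectorSpan ℝ (Set.range z))
          have h4 : Module.finrank ℝ (EuclideanSpace ℝ (Fin 2)) = 2 :=
            finrank_euclideanSpace_fin
          omega
        omega
      obtain ⟨e⟩ := Function.Embedding.nonempty_of_card_le
        (show Fintype.card ι ≤ Fintype.card (Fin 3) by simpa using hcard)
      set w' : Fin 3 → ℝ := Function.extend e w (fun _ => 0) with hw'def
      set p' : Fin 3 → EuclideanSpace ℝ (Fin 2) := Function.extend e z (fun _ => c) with hp'def
      have hw'e : ∀ i, w' (e i) = w i := fun i => e.injective.extend_apply w _ i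
      have hp'e : ∀ i, p' (e i) = z i := fun i => e.injective.extend_apply z _ i
      have hinj : ∀ i ∈ Finset.univ, ∀ j ∈ Finset.univ, e i = e j → i = j :=
        fun i _ j _ h => e.injective h
      have hw'0 : ∀ j ∉ Finset.univ.image e, w' j = 0 := by
        intro j hj
        apply Function.extend_apply'
        rintro ⟨i, rfl⟩
        exact hj (Finset.mem_image_of_mem e (Finset.mem_univ i))
      have hsw : ∑ j, w' j = ∑ i, w i := by
        calc ∑ j : Fin 3, w' j = ∑ j ∈ Finset.univ.image e, w' j :=
              (Finset.sum_subset (Finset.subset_univ _) (fun j _ hj => hw'0 j hj)).symm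
          _ = ∑ i, w' (e i) := Finset.sum_image hinj
          _ = ∑ i, w i := by simp only [hw'e]
      have hsp : ∑ j, w' j • p' j = ∑ i, w i • z i := by
        calc ∑ j : Fin 3, w' j • p' j = ∑ j ∈ Finset.univ.image e, w' j • p' j :=
              (Finset.sum_subset (Finset.subset_univ _)
                (fun j _ hj => by rw [hw'0 j hj, zero_smul])).symm
          _ = ∑ i, w' (e i) • p' (e i) := Finset.sum_image hinj
          _ = ∑ i, w i • z i := by simp only [hw'e, hp'e]
      refine ⟨(w', p'), Set.mem_prod.mpr ⟨⟨?_, ?_⟩, ?_⟩, ?_⟩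
      · intro j
        show 0 ≤ w' j
        by_cases hj : j ∈ Finset.univ.image e
        · obtain ⟨i, _, rfl⟩ := Finset.mem_image.mp hj
          rw [hw'e]; exact (hwpos i).le
        · rw [hw'0 j hj]
      · show ∑ j, w' j = 1
        rw [hsw, hwsum]
      · intro j _
        show p' j ∈ s
        by_cases hj : ∃ i, e i = j
        · obtain ⟨i, rfl⟩ := hj
          rw [hp'e]
          exact hzs ⟨i, rfl⟩
        · rw [hp'def, Function.extend_apply' _ _ _ hj]
          exact hc
      · show ∑ j, w' j • p' j = x
        rw [hsp, hcomb]
    · rintro x ⟨⟨w, p⟩, hmem, rfl⟩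
      obtain ⟨⟨hw0, hw1⟩, hp⟩ := Set.mem_prod.mp hmem
      exact (convex_convexHull ℝ s).sum_mem (fun i _ => hw0 i) hw1
        (fun i _ => subset_convexHull ℝ s (hp i (Set.mem_univ i)))
  rw [himg]
  exact hK.image hgc


/-- Isbell's equivalence: a compact connected set containing the origin meets every line at
distance 1 from the origin iff its convex hull contains the closed unit disk. -/
theorem meets_all_tangents_iff_hull_contains_disk
    (C : Set (EuclideanSpace ℝ (Fin 2))) (hC : IsCompact C) (hconn : IsConnected C)
    (h0 : (0 : EuclideanSpace ℝ (Fin 2)) ∈ C) :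
    (∀ u : EuclideanSpace ℝ (Fin 2), ‖u‖ = 1 → ∃ p ∈ C, ⟪p, u⟫ = (1:ℝ)) ↔
      Metric.closedBall (0 : EuclideanSpace ℝ (Fin 2)) 1 ⊆ convexHull ℝ C := by
  constructor
  · -- meets tangents → hull contains disk
    intro h x hx
    by_contra hxmem
    have hhull : IsCompact (convexHull ℝ C) := aux_isCompact_convexHull hC ⟨0, h0⟩
    obtain ⟨f, t, hft, htx⟩ :=
      geometric_hahn_banach_closed_point (convex_convexHull ℝ C) hhull.isClosed hxmem
    obtain ⟨v, hv⟩ := (InnerProductSpace.toDual ℝ (EuclideanSpace ℝ (Fin 2))).surjective f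
    have hf : ∀ p, f p = ⟪v, p⟫ := fun p => by rw [← hv]; rfl
    have h0' : (0:ℝ) < t := by
      have := hft 0 (subset_convexHull ℝ C h0)
      simpa [hf] using this
    have hvx : (0:ℝ) < ⟪v, x⟫ := by
      have := htx; rw [hf] at this; linarith
    have hvne : v ≠ 0 := by
      intro hv0; rw [hv0, inner_zero_left] at hvx; linarith
    have hnv : (0:ℝ) < ‖v‖ := norm_pos_iff.mpr hvne
    set u : EuclideanSpace ℝ (Fin 2) := (‖v‖)⁻¹ • v with hu
    have hun : ‖u‖ = 1 := by
      rw [hu, norm_smul, norm_inv, norm_norm, inv_mul_cancel₀ hnv.ne']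
    obtain ⟨p, hpC, hpu⟩ := h u hun
    have hpt : ⟪v, p⟫ < t := by
      have := hft p (subset_convexHull ℝ C hpC); rwa [hf] at this
    have hvx1 : ⟪v, x⟫ ≤ ‖v‖ := by
      calc ⟪v, x⟫ ≤ ‖v‖ * ‖x‖ := real_inner_le_norm v x
        _ ≤ ‖v‖ * 1 := by
            have := Metric.mem_closedBall.mp hx
            rw [dist_zero_right] at this
            nlinarith
        _ = ‖v‖ := mul_one _
    have hpu' : ⟪v, p⟫ = ‖v‖ := by
      have : ⟪p, u⟫ = (‖v‖)⁻¹ * ⟪v, p⟫ := by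
        rw [hu, real_inner_smul_right, real_inner_comm]
      rw [this] at hpu
      exact ((inv_mul_eq_one₀ hnv.ne').mp hpu).symm
    rw [hf] at htx
    linarith
  · -- hull contains disk → meets tangents
    intro h u hun
    have huC : u ∈ convexHull ℝ C := by
      apply h
      simp [Metric.mem_closedBall, dist_zero_right, hun]
    -- some point of C has inner ≥ 1
    have hq : ∃ q ∈ C, (1:ℝ) ≤ ⟪q, u⟫ := by
      by_contra hcon
      push_neg at hcon
      have hsub : C ⊆ {p : EuclideanSpace ℝ (Fin 2) | ⟪p, u⟫ < (1:ℝ)} :=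
        fun p hp => hcon p hp
      have hconv : Convex ℝ {p : EuclideanSpace ℝ (Fin 2) | ⟪p, u⟫ < (1:ℝ)} := by
        apply convex_halfSpace_lt
        exact ⟨fun a b => inner_add_left a b u, fun c a => real_inner_smul_left a u c⟩
      have := convexHull_min hsub hconv huC
      have huu : ⟪u, u⟫ = (1:ℝ) := by
        rw [real_inner_self_eq_norm_sq, hun]; norm_num
      simp only [Set.mem_setOf_eq, huu] at this
      linarith
    obtain ⟨q, hqC, hq1⟩ := hq
    have hcont : ContinuousOn (fun p : EuclideanSpace ℝ (Fin 2) => ⟪p, u⟫) C :=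
      (continuous_id.inner continuous_const).continuousOn
    have := hconn.isPreconnected.intermediate_value (a := 0) (b := q) h0 hqC hcont
    have h1 : (1:ℝ) ∈ Set.Icc (⟪(0:EuclideanSpace ℝ (Fin 2)), u⟫) (⟪q, u⟫) := by
      constructor
      · rw [inner_zero_left]; norm_num
      · exact hq1
    obtain ⟨p, hpC, hpu⟩ := this h1
    exact ⟨p, hpC, hpu⟩
end

section
/- There exists a continuous path f : [0,1] → ℝ² with f 0 = 0 and total length eVariationOn f (Set.Icc 0 1) = 7π/6 + 1 + √3 such that for every unit vector u ∈ ℝ² there exists t ∈ [0,1] with ⟪f t, u⟫ = 1 (i.e., the path meets every line at distance 1 from the origin). -/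
open scoped RealInnerProductSpace
open Set Real Filter

noncomputable def isbellPt (x y : ℝ) : EuclideanSpace ℝ (Fin 2) :=
  EuclideanSpace.single 0 x + EuclideanSpace.single 1 y

lemma isbellPt_apply_zero (x y : ℝ) : isbellPt x y 0 = x := by
  simp [isbellPt, EuclideanSpace.single_apply]

lemma isbellPt_apply_one (x y : ℝ) : isbellPt x y 1 = y := by
  simp [isbellPt, EuclideanSpace.single_apply]

lemma isbellPt_zero : isbellPt 0 0 = 0 := by
  ext j
  fin_cases j <;>
    simp [isbellPt, EuclideanSpace.single_apply]

lemma dist_isbellPt (x y x' y' : ℝ) :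
    dist (isbellPt x y) (isbellPt x' y') = Real.sqrt ((x - x')^2 + (y - y')^2) := by
  rw [EuclideanSpace.dist_eq]
  simp [Fin.sum_univ_two, isbellPt_apply_zero, isbellPt_apply_one, Real.dist_eq, sq_abs]

lemma inner_isbellPt (x y : ℝ) (u : EuclideanSpace ℝ (Fin 2)) :
    ⟪isbellPt x y, u⟫ = x * u 0 + y * u 1 := by
  simp [isbellPt, inner_add_left, EuclideanSpace.inner_single_left]

lemma continuous_isbellPt {x y : ℝ → ℝ} (hx : Continuous x) (hy : Continuous y) :
    Continuous fun t => isbellPt (x t) (y t) := by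
  have hsingle : ∀ (i : Fin 2) (a : ℝ), EuclideanSpace.single i a
      = a • EuclideanSpace.single i (1:ℝ) := by
    intro i a
    ext j
    simp [EuclideanSpace.single_apply, PiLp.smul_apply, mul_ite]
  have heq : (fun t => isbellPt (x t) (y t))
      = fun t => x t • EuclideanSpace.single (0 : Fin 2) (1:ℝ)
          + y t • EuclideanSpace.single (1 : Fin 2) (1:ℝ) := by
    funext t
    rw [isbellPt, hsingle 0 (x t), hsingle 1 (y t)]
  rw [heq]
  exact ((hx.smul continuous_const).add (hy.smul continuous_const))
open Set Real Filter Topology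

lemma dist_circle (A B : ℝ) :
    dist (isbellPt (Real.cos A) (Real.sin A)) (isbellPt (Real.cos B) (Real.sin B))
      = 2 * |Real.sin ((A - B) / 2)| := by
  rw [dist_isbellPt]
  have hsq : Real.sin ((A - B) / 2) ^ 2 = 1 / 2 - Real.cos (A - B) / 2 := by
    have := Real.sin_sq_eq_half_sub ((A - B) / 2)
    rw [show 2 * ((A - B) / 2) = A - B by ring] at this
    exact this
  have h : (Real.cos A - Real.cos B)^2 + (Real.sin A - Real.sin B)^2
      = (2 * Real.sin ((A - B) / 2))^2 := by
    rw [Real.cos_sub] at hsq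
    nlinarith [Real.sin_sq_add_cos_sq A, Real.sin_sq_add_cos_sq B]
  rw [h, Real.sqrt_sq_eq_abs, abs_mul]
  norm_num

lemma dist_circle_le (A B : ℝ) :
    dist (isbellPt (Real.cos A) (Real.sin A)) (isbellPt (Real.cos B) (Real.sin B)) ≤ |A - B| := by
  rw [dist_circle]
  calc 2 * |Real.sin ((A - B) / 2)| ≤ 2 * |(A - B) / 2| := by
        have := Real.abs_sin_le_abs (x := (A - B) / 2)
        linarith
    _ = |A - B| := by rw [abs_div, abs_two]; ring

lemma arc_lower {c a θ : ℝ} (hθ0 : 0 ≤ θ) (hθ2 : θ ≤ 2 * π) :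
    ENNReal.ofReal θ
      ≤ eVariationOn (fun t => isbellPt (Real.cos (c - t)) (Real.sin (c - t))) (Icc a (a + θ)) := by
  rcases eq_or_lt_of_le hθ0 with h | hθpos
  · simp [← h]
  set g : ℝ → EuclideanSpace ℝ (Fin 2) :=
    fun t => isbellPt (Real.cos (c - t)) (Real.sin (c - t)) with hg
  have key : ∀ n : ℕ, 1 ≤ n →
      ENNReal.ofReal (2 * n * Real.sin (θ / (2 * n))) ≤ eVariationOn g (Icc a (a + θ)) := by
    intro n hn
    have hnpos : (0:ℝ) < n := by exact_mod_cast hn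
    set Δ : ℝ := θ / n with hΔ
    have hΔpos : 0 < Δ := div_pos hθpos hnpos
    have hΔle : Δ ≤ θ := by
      rw [hΔ, div_le_iff₀ hnpos]
      have h1n : (1:ℝ) ≤ n := by exact_mod_cast hn
      nlinarith
    set u : ℕ → ℝ := fun i => a + (min i n : ℕ) * Δ with hu
    have hum : Monotone u := by
      intro i j hij
      have hmin : (min i n : ℕ) ≤ min j n := min_le_min hij le_rfl
      have : ((min i n : ℕ) : ℝ) ≤ ((min j n : ℕ) : ℝ) := by exact_mod_cast hmin
      simp only [hu]
      nlinarith
    have hus : ∀ i, u i ∈ Icc a (a + θ) := by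
      intro i
      have h0 : (0:ℝ) ≤ ((min i n : ℕ) : ℝ) := by positivity
      have hub : ((min i n : ℕ) : ℝ) ≤ (n : ℝ) := by exact_mod_cast min_le_right i n
      have hnΔ : (n : ℝ) * Δ = θ := by rw [hΔ]; field_simp
      constructor
      · simp only [hu]; nlinarith
      · simp only [hu]; nlinarith [mul_le_mul_of_nonneg_right hub hΔpos.le]
    have hsum := eVariationOn.sum_le (f := g) (n := n) hum hus
    have hhalf : 0 ≤ Real.sin (Δ / 2) := by
      apply Real.sin_nonneg_of_nonneg_of_le_pi
      · positivity
      · nlinarith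
    have heach : ∀ i ∈ Finset.range n,
        edist (g (u (i+1))) (g (u i)) = ENNReal.ofReal (2 * Real.sin (Δ / 2)) := by
      intro i hi
      rw [Finset.mem_range] at hi
      have h1 : u (i+1) = a + ((i:ℝ)+1) * Δ := by
        simp only [hu, min_eq_left (Nat.succ_le_of_lt hi)]
        push_cast; ring
      have h2 : u i = a + (i:ℝ) * Δ := by
        simp only [hu, min_eq_left hi.le]
      rw [edist_dist, hg]
      rw [dist_circle]
      have harg : (c - u (i+1) - (c - u i)) / 2 = -(Δ / 2) := by
        rw [h1, h2]; ring
      rw [harg, Real.sin_neg, abs_neg, abs_of_nonneg hhalf]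
    rw [Finset.sum_congr rfl heach, Finset.sum_const, Finset.card_range] at hsum
    refine le_trans (le_of_eq ?_) hsum
    rw [nsmul_eq_mul, ← ENNReal.ofReal_natCast, ← ENNReal.ofReal_mul (by positivity)]
    congr 1
    rw [hΔ, div_div]
    ring_nf
  -- limit
  have hx : Tendsto (fun n : ℕ => θ / (2 * n)) atTop (𝓝[≠] 0) := by
    rw [tendsto_nhdsWithin_iff]
    constructor
    · have := tendsto_const_div_atTop_nhds_zero_nat (θ / 2)
      refine this.congr fun n => ?_
      rw [div_div]
    · filter_upwards [eventually_ge_atTop 1] with n hn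
      have hnpos : (0:ℝ) < n := by exact_mod_cast hn
      have : 0 < θ / (2 * n) := by positivity
      exact ne_of_gt this
  have hslope : Tendsto (fun x : ℝ => Real.sin x / x) (𝓝[≠] 0) (𝓝 1) := by
    have h := Real.hasDerivAt_sin 0
    rw [hasDerivAt_iff_tendsto_slope] at h
    rw [Real.cos_zero] at h
    refine h.congr fun x => ?_
    rw [slope_def_field]
    simp [Real.sin_zero]
  have hT : Tendsto (fun n : ℕ => 2 * (n:ℝ) * Real.sin (θ / (2 * n))) atTop (𝓝 θ) := by
    have h1 : Tendsto (fun n : ℕ => θ * (Real.sin (θ / (2 * n)) / (θ / (2 * n)))) atTop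
        (𝓝 (θ * 1)) := tendsto_const_nhds.mul (hslope.comp hx)
    rw [mul_one] at h1
    refine h1.congr' ?_
    filter_upwards [eventually_ge_atTop 1] with n hn
    have hnpos : (0:ℝ) < n := by exact_mod_cast hn
    have hne : θ / (2 * n) ≠ 0 := by positivity
    field_simp
  exact le_of_tendsto ((ENNReal.continuous_ofReal.tendsto θ).comp hT)
    (eventually_atTop.2 ⟨1, key⟩)

lemma evar_le_of_lip {E : Type*} [PseudoMetricSpace E] {g : ℝ → E} {a b : ℝ} (hab : a ≤ b)
    (h : ∀ x ∈ Icc a b, ∀ y ∈ Icc a b, dist (g x) (g y) ≤ |x - y|) :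
    eVariationOn g (Icc a b) ≤ ENNReal.ofReal (b - a) := by
  have hl : LipschitzOnWith 1 g (Icc a b) :=
    LipschitzOnWith.of_dist_le_mul (fun x hx y hy => by
      simpa [Real.dist_eq] using h x hx y hy)
  have hcomp := hl.comp_eVariationOn_le (mapsTo_id (Icc a b))
  have hid : eVariationOn (id : ℝ → ℝ) (Icc a b) ≤ ENNReal.ofReal (b - a) := by
    have := (monotoneOn_id (s := Icc a b)).eVariationOn_le
      (left_mem_Icc.2 hab) (right_mem_Icc.2 hab)
    simpa using this
  calc eVariationOn g (Icc a b) = eVariationOn (g ∘ id) (Icc a b) := by rw [Function.comp_id]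
    _ ≤ 1 * eVariationOn (id : ℝ → ℝ) (Icc a b) := hcomp
    _ ≤ ENNReal.ofReal (b - a) := by simpa using hid

lemma evar_eq_of_unit_speed {E : Type*} [PseudoMetricSpace E] {g : ℝ → E} {a b : ℝ} (hab : a ≤ b)
    (h : ∀ x ∈ Icc a b, ∀ y ∈ Icc a b, dist (g x) (g y) ≤ |x - y|)
    (h2 : dist (g a) (g b) = b - a) :
    eVariationOn g (Icc a b) = ENNReal.ofReal (b - a) := by
  refine le_antisymm (evar_le_of_lip hab h) ?_
  have := eVariationOn.edist_le g (left_mem_Icc.2 hab) (right_mem_Icc.2 hab)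
  rwa [edist_dist, h2] at this
open Set Real Filter Topology

noncomputable section IsbellPath

def sq3 : ℝ := Real.sqrt 3
def ib1 : ℝ := 2 / sq3
def ib2 : ℝ := sq3
def ib3 : ℝ := sq3 + 7 * π / 6
def ib4 : ℝ := sq3 + 7 * π / 6 + 1

def ip1 (t : ℝ) : EuclideanSpace ℝ (Fin 2) := isbellPt (sq3 / 2 * t) (t / 2)
def ip2 (t : ℝ) : EuclideanSpace ℝ (Fin 2) := isbellPt 1 (1 / sq3 - (t - ib1))
def ip3 (t : ℝ) : EuclideanSpace ℝ (Fin 2) := isbellPt (Real.cos (ib2 - t)) (Real.sin (ib2 - t))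
def ip4 (t : ℝ) : EuclideanSpace ℝ (Fin 2) :=
  isbellPt (-(sq3 / 2) + (t - ib3) / 2) (1 / 2 + (t - ib3) * (sq3 / 2))

def gpath (t : ℝ) : EuclideanSpace ℝ (Fin 2) :=
  if t ≤ ib1 then ip1 t else if t ≤ ib2 then ip2 t else if t ≤ ib3 then ip3 t else ip4 t

lemma sq3_sq : sq3 ^ 2 = 3 := Real.sq_sqrt (by norm_num)
lemma sq3_pos : 0 < sq3 := Real.sqrt_pos.2 (by norm_num)
lemma sq3_gt_one : 1 < sq3 := by nlinarith [sq3_sq, sq3_pos]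
lemma sq3_lt_two : sq3 < 2 := by nlinarith [sq3_sq, sq3_pos]

lemma ib1_pos : 0 < ib1 := div_pos (by norm_num) sq3_pos
lemma ib12 : ib1 < ib2 := by
  rw [ib1, ib2, div_lt_iff₀ sq3_pos]
  nlinarith [sq3_sq]
lemma ib23 : ib2 < ib3 := by
  have := Real.pi_pos
  rw [ib2, ib3]; linarith
lemma ib34 : ib3 < ib4 := by rw [ib3, ib4]; linarith
lemma ib4_pos : 0 < ib4 := lt_trans (lt_trans (lt_trans ib1_pos ib12) ib23) ib34

lemma junction1 : ip1 ib1 = ip2 ib1 := by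
  rw [ip1, ip2]
  have hne : sq3 ≠ 0 := ne_of_gt sq3_pos
  have h1 : sq3 / 2 * ib1 = 1 := by rw [ib1]; field_simp
  have h2 : ib1 / 2 = 1 / sq3 - (ib1 - ib1) := by rw [ib1]; ring
  rw [h1, h2]

lemma junction2 : ip2 ib2 = ip3 ib2 := by
  rw [ip2, ip3]
  have h1 : (1:ℝ) = Real.cos (ib2 - ib2) := by simp
  have h2 : 1 / sq3 - (ib2 - ib1) = Real.sin (ib2 - ib2) := by
    rw [ib1, ib2]
    have : sq3 ≠ 0 := ne_of_gt sq3_pos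
    rw [sub_self, Real.sin_zero]
    field_simp
    nlinarith [sq3_sq]
  rw [← h1, ← h2]

lemma cos_7pi6 : Real.cos (7 * π / 6) = -(sq3 / 2) := by
  rw [show (7:ℝ) * π / 6 = π + π / 6 by ring, Real.cos_add]
  simp [Real.cos_pi_div_six, sq3]

lemma sin_7pi6 : Real.sin (7 * π / 6) = -(1 / 2) := by
  rw [show (7:ℝ) * π / 6 = π + π / 6 by ring, Real.sin_add]
  simp [Real.sin_pi_div_six]

lemma junction3 : ip3 ib3 = ip4 ib3 := by
  rw [ip3, ip4]
  have harg : ib2 - ib3 = -(7 * π / 6) := by rw [ib2, ib3]; ring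
  rw [harg, Real.cos_neg, Real.sin_neg, cos_7pi6, sin_7pi6]
  norm_num

lemma gpath_on1 : EqOn gpath ip1 (Icc 0 ib1) := fun t ht => by
  rw [gpath, if_pos ht.2]

lemma gpath_on2 : EqOn gpath ip2 (Icc ib1 ib2) := fun t ht => by
  by_cases h : t ≤ ib1
  · have : t = ib1 := le_antisymm h ht.1
    rw [gpath, if_pos h, this, junction1]
  · rw [gpath, if_neg h, if_pos ht.2]

lemma gpath_on3 : EqOn gpath ip3 (Icc ib2 ib3) := fun t ht => by
  have h1 : ¬ t ≤ ib1 ∨ t = ib2 := by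
    rcases le_or_gt t ib1 with h | h
    · right; exact le_antisymm (h.trans ib12.le) ht.1
    · left; exact not_le.2 h
  by_cases h : t ≤ ib2
  · have ht2 : t = ib2 := le_antisymm h ht.1
    subst ht2
    rw [gpath, if_neg (not_le.2 ib12), if_pos le_rfl, junction2]
  · rcases h1 with h1 | h1
    · rw [gpath, if_neg h1, if_neg h, if_pos ht.2]
    · exact absurd (h1 ▸ le_rfl) h
  
lemma gpath_on4 : EqOn gpath ip4 (Icc ib3 ib4) := fun t ht => by
  have h1 : ¬ t ≤ ib1 := not_le.2 (lt_of_lt_of_le (ib12.trans ib23) ht.1)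
  have h2 : ¬ t ≤ ib2 := not_le.2 (lt_of_lt_of_le ib23 ht.1)
  by_cases h : t ≤ ib3
  · have : t = ib3 := le_antisymm h ht.1
    rw [gpath, if_neg h1, if_neg h2, if_pos h, this, junction3]
  · rw [gpath, if_neg h1, if_neg h2, if_neg h]

lemma dist_ip1 (x y : ℝ) : dist (ip1 x) (ip1 y) = |x - y| := by
  rw [ip1, ip1, dist_isbellPt]
  have h : (sq3 / 2 * x - sq3 / 2 * y)^2 + (x / 2 - y / 2)^2 = (x - y)^2 := by
    nlinarith [sq3_sq]
  rw [h, Real.sqrt_sq_eq_abs]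

lemma dist_ip2 (x y : ℝ) : dist (ip2 x) (ip2 y) = |x - y| := by
  rw [ip2, ip2, dist_isbellPt]
  have h : ((1:ℝ) - 1)^2 + (1 / sq3 - (x - ib1) - (1 / sq3 - (y - ib1)))^2 = (x - y)^2 := by
    ring
  rw [h, Real.sqrt_sq_eq_abs]

lemma dist_ip4 (x y : ℝ) : dist (ip4 x) (ip4 y) = |x - y| := by
  rw [ip4, ip4, dist_isbellPt]
  have h : (-(sq3 / 2) + (x - ib3) / 2 - (-(sq3 / 2) + (y - ib3) / 2))^2
      + (1 / 2 + (x - ib3) * (sq3 / 2) - (1 / 2 + (y - ib3) * (sq3 / 2)))^2 = (x - y)^2 := by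
    nlinarith [sq3_sq]
  rw [h, Real.sqrt_sq_eq_abs]

lemma evar_ip1 : eVariationOn gpath (Icc 0 ib1) = ENNReal.ofReal (ib1 - 0) := by
  rw [eVariationOn.eq_of_eqOn gpath_on1]
  exact evar_eq_of_unit_speed ib1_pos.le
    (fun x _ y _ => (dist_ip1 x y).le)
    (by rw [dist_ip1, abs_of_nonpos (by linarith [ib1_pos]), neg_sub])

lemma evar_ip2 : eVariationOn gpath (Icc ib1 ib2) = ENNReal.ofReal (ib2 - ib1) := by
  rw [eVariationOn.eq_of_eqOn gpath_on2]
  exact evar_eq_of_unit_speed ib12.le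
    (fun x _ y _ => (dist_ip2 x y).le)
    (by rw [dist_ip2, abs_of_nonpos (by linarith [ib12]), neg_sub])

lemma evar_ip4 : eVariationOn gpath (Icc ib3 ib4) = ENNReal.ofReal (ib4 - ib3) := by
  rw [eVariationOn.eq_of_eqOn gpath_on4]
  exact evar_eq_of_unit_speed ib34.le
    (fun x _ y _ => (dist_ip4 x y).le)
    (by rw [dist_ip4, abs_of_nonpos (by linarith [ib34]), neg_sub])

lemma evar_ip3 : eVariationOn gpath (Icc ib2 ib3) = ENNReal.ofReal (7 * π / 6) := by
  rw [eVariationOn.eq_of_eqOn gpath_on3]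
  have hpi := Real.pi_pos
  refine le_antisymm ?_ ?_
  · have := evar_le_of_lip (g := ip3) (a := ib2) (b := ib3) ib23.le
      (fun x _ y _ => by
        rw [ip3, ip3]
        have := dist_circle_le (ib2 - x) (ib2 - y)
        calc dist (isbellPt (Real.cos (ib2 - x)) (Real.sin (ib2 - x)))
              (isbellPt (Real.cos (ib2 - y)) (Real.sin (ib2 - y)))
            ≤ |ib2 - x - (ib2 - y)| := this
          _ = |x - y| := by
              rw [show ib2 - x - (ib2 - y) = y - x by ring]
              exact abs_sub_comm y x)
    refine this.trans (le_of_eq ?_)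
    congr 1
    rw [ib2, ib3]; ring
  · have h := arc_lower (c := ib2) (a := ib2) (θ := 7 * π / 6)
      (by positivity) (by linarith)
    have hset : ib2 + 7 * π / 6 = ib3 := by rw [ib2, ib3]
    rw [hset] at h
    exact h

lemma evar_gpath : eVariationOn gpath (Icc 0 ib4) = ENNReal.ofReal (7 * π / 6 + 1 + sq3) := by
  have hpi := Real.pi_pos
  have h1 := eVariationOn.Icc_add_Icc gpath (s := univ) ib1_pos.le ib12.le (mem_univ ib1)
  have h2 := eVariationOn.Icc_add_Icc gpath (s := univ)
    (ib1_pos.le.trans ib12.le) ib23.le (mem_univ ib2)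
  have h3 := eVariationOn.Icc_add_Icc gpath (s := univ)
    ((ib1_pos.le.trans ib12.le).trans ib23.le) ib34.le (mem_univ ib3)
  simp only [univ_inter] at h1 h2 h3
  rw [← h3, ← h2, ← h1, evar_ip1, evar_ip2, evar_ip3, evar_ip4]
  have hn1 : (0:ℝ) ≤ ib1 - 0 := by linarith [ib1_pos]
  have hn2 : (0:ℝ) ≤ ib2 - ib1 := by linarith [ib12]
  have hn3 : (0:ℝ) ≤ 7 * π / 6 := by positivity
  have hn4 : (0:ℝ) ≤ ib4 - ib3 := by linarith [ib34]
  rw [← ENNReal.ofReal_add hn1 hn2, ← ENNReal.ofReal_add (by linarith) hn3,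
    ← ENNReal.ofReal_add (by linarith) hn4]
  congr 1
  rw [ib1, ib2, ib3, ib4]
  have : sq3 ≠ 0 := ne_of_gt sq3_pos
  field_simp
  ring

lemma continuous_gpath : Continuous gpath := by
  have hc1 : Continuous ip1 := continuous_isbellPt (by fun_prop) (by fun_prop)
  have hc2 : Continuous ip2 := continuous_isbellPt (by fun_prop) (by fun_prop)
  have hc3 : Continuous ip3 := continuous_isbellPt (by fun_prop) (by fun_prop)
  have hc4 : Continuous ip4 := continuous_isbellPt (by fun_prop) (by fun_prop)
  have h34 : Continuous fun t => if t ≤ ib3 then ip3 t else ip4 t := by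
    refine Continuous.if_le hc3 hc4 continuous_id continuous_const ?_
    intro x hx; rw [hx]; exact junction3
  have h234 : Continuous fun t => if t ≤ ib2 then ip2 t else if t ≤ ib3 then ip3 t else ip4 t := by
    refine Continuous.if_le hc2 h34 continuous_id continuous_const ?_
    intro x hx; rw [hx, if_pos ib23.le]; exact junction2
  have : Continuous fun t =>
      if t ≤ ib1 then ip1 t else if t ≤ ib2 then ip2 t else if t ≤ ib3 then ip3 t else ip4 t := by
    refine Continuous.if_le hc1 h234 continuous_id continuous_const ?_
    intro x hx; rw [hx, if_pos ib12.le]; exact junction1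
  exact this

end IsbellPath

open scoped RealInnerProductSpace

/-- There is a path of length 7π/6 + 1 + √3 starting from the origin that meets every line at
distance 1 from the origin. -/
theorem exists_path_meeting_all_unit_distance_lines :
    ∃ f : ℝ → EuclideanSpace ℝ (Fin 2),
      ContinuousOn f (Set.Icc 0 1) ∧ f 0 = 0 ∧
      eVariationOn f (Set.Icc 0 1) = ENNReal.ofReal (7 * Real.pi / 6 + 1 + Real.sqrt 3) ∧
      ∀ u : EuclideanSpace ℝ (Fin 2), ‖u‖ = 1 →
        ∃ t ∈ Set.Icc (0:ℝ) 1, ⟪f t, u⟫ = (1:ℝ) := by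
  have hpi := Real.pi_pos
  have hib4 := ib4_pos
  have hib4' : ib4 ≠ 0 := ne_of_gt hib4
  refine ⟨fun τ => gpath (ib4 * τ), ?_, ?_, ?_, ?_⟩
  · exact (continuous_gpath.comp (by fun_prop)).continuousOn
  · show gpath (ib4 * 0) = 0
    rw [mul_zero, gpath, if_pos ib1_pos.le, ip1]
    rw [mul_zero, zero_div]
    exact isbellPt_zero
  · have hφ : MonotoneOn (fun τ : ℝ => ib4 * τ) (Icc 0 1) := fun x _ y _ h =>
      mul_le_mul_of_nonneg_left h hib4.le
    have hcomp := eVariationOn.comp_eq_of_monotoneOn gpath (fun τ : ℝ => ib4 * τ) hφ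
    have himg : (fun τ : ℝ => ib4 * τ) '' Icc 0 1 = Icc 0 ib4 := by
      rw [Set.image_mul_left_Icc hib4.le zero_le_one, mul_zero, mul_one]
    rw [himg] at hcomp
    rw [show (fun τ : ℝ => gpath (ib4 * τ)) = gpath ∘ (fun τ : ℝ => ib4 * τ) from rfl, hcomp,
      evar_gpath]
    rfl
  · intro u hu
    set u0 : ℝ := u 0 with hu0
    set u1 : ℝ := u 1 with hu1
    have hsum : u0 ^ 2 + u1 ^ 2 = 1 := by
      rw [EuclideanSpace.norm_eq] at hu
      rw [Fin.sum_univ_two] at hu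
      simp only [Real.norm_eq_abs, sq_abs] at hu
      exact Real.sqrt_eq_one.1 hu
    have hu0le : u0 ≤ 1 := by nlinarith
    have hu0ge : -1 ≤ u0 := by nlinarith
    set f : ℝ → EuclideanSpace ℝ (Fin 2) := fun τ => gpath (ib4 * τ) with hf
    -- arc helper: exact intersection
    have harc : ∀ ψ : ℝ, -(7 * π / 6) ≤ ψ → ψ ≤ 0 → Real.cos ψ = u0 → Real.sin ψ = u1 →
        ∃ t ∈ Set.Icc (0:ℝ) 1, ⟪f t, u⟫ = (1:ℝ) := by
      intro ψ h1 h2 hc hs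
      have htmem : ib2 - ψ ∈ Icc ib2 ib3 := by
        constructor
        · linarith
        · rw [ib2, ib3]; linarith [sq3_pos]
      refine ⟨(ib2 - ψ) / ib4, ⟨?_, ?_⟩, ?_⟩
      · have hpos : 0 < ib2 - ψ := by
          have := sq3_pos; rw [ib2]; linarith
        exact (div_pos hpos hib4).le
      · rw [div_le_one hib4]
        have := htmem.2
        linarith [ib34]
      · have hval : f ((ib2 - ψ) / ib4) = ip3 (ib2 - ψ) := by
          show gpath (ib4 * ((ib2 - ψ) / ib4)) = ip3 (ib2 - ψ)
          have : ib4 * ((ib2 - ψ) / ib4) = ib2 - ψ := by field_simp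
          rw [this]
          exact gpath_on3 htmem
        rw [hval, ip3, show ib2 - (ib2 - ψ) = ψ by ring, inner_isbellPt, hc, hs, ← hu0, ← hu1]
        nlinarith
    -- IVT helper
    have hIVT : ∀ t' : ℝ, t' ∈ Set.Icc (0:ℝ) 1 → 1 ≤ ⟪f t', u⟫ →
        ∃ t ∈ Set.Icc (0:ℝ) 1, ⟪f t, u⟫ = (1:ℝ) := by
      intro t' ht' hge
      have hfc : Continuous f := continuous_gpath.comp (by fun_prop)
      have hcont : ContinuousOn (fun τ => ⟪f τ, u⟫) (Icc 0 t') :=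
        (hfc.inner continuous_const).continuousOn
      have h0 : ⟪f 0, u⟫ = (0:ℝ) := by
        have : f 0 = 0 := by
          rw [hf]
          show gpath (ib4 * 0) = 0
          rw [mul_zero, gpath, if_pos ib1_pos.le, ip1, mul_zero, zero_div]
          exact isbellPt_zero
        rw [this, inner_zero_left]
      have hmem : (1:ℝ) ∈ Icc (⟪f 0, u⟫) (⟪f t', u⟫) := by
        rw [h0]; exact ⟨zero_le_one, hge⟩
      obtain ⟨t, htI, ht⟩ := intermediate_value_Icc ht'.1 hcont hmem
      exact ⟨t, ⟨htI.1, htI.2.trans ht'.2⟩, ht⟩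
    rcases le_or_gt u1 0 with hcase1 | hcase1
    · -- lower half plane: exact point on arc with ψ = -arccos u0
      refine harc (-(Real.arccos u0)) ?_ ?_ ?_ ?_
      · have := Real.arccos_le_pi u0; linarith
      · linarith [Real.arccos_nonneg u0]
      · rw [Real.cos_neg]; exact Real.cos_arccos hu0ge hu0le
      · rw [Real.sin_neg, Real.sin_arccos]
        have h1 : 1 - u0 ^ 2 = u1 ^ 2 := by linarith
        rw [h1, Real.sqrt_sq_eq_abs, abs_of_nonpos hcase1, neg_neg]
    · rcases le_or_gt (1/2 : ℝ) u0 with hcase2 | hcase2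
      · -- use point A = (1, 1/√3), via IVT
        refine hIVT (ib1 / ib4) ⟨(div_pos ib1_pos hib4).le, ?_⟩ ?_
        · rw [div_le_one hib4]
          linarith [ib12, ib23, ib34]
        · have hval : f (ib1 / ib4) = ip1 ib1 := by
            show gpath (ib4 * (ib1 / ib4)) = ip1 ib1
            have : ib4 * (ib1 / ib4) = ib1 := by field_simp
            rw [this]
            exact gpath_on1 ⟨ib1_pos.le, le_rfl⟩
          rw [hval, ip1, inner_isbellPt, ← hu0, ← hu1]
          have hX : sq3 / 2 * ib1 = 1 := by
            rw [ib1]; field_simp [ne_of_gt sq3_pos]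
          have hY : ib1 / 2 = 1 / sq3 := by rw [ib1]; ring
          rw [hX, hY]
          -- show 1 ≤ u0 + u1/√3, i.e. √3(1-u0) ≤ u1
          have hkey : sq3 * (1 - u0) ≤ u1 := by
            have hnn : 0 ≤ sq3 * (1 - u0) := mul_nonneg sq3_pos.le (by linarith)
            have hsq : (sq3 * (1 - u0)) ^ 2 ≤ u1 ^ 2 := by
              nlinarith [sq3_sq]
            nlinarith
          have : 1 - u0 ≤ 1 / sq3 * u1 := by
            rw [one_div, ← div_eq_inv_mul, le_div_iff₀ sq3_pos]
            nlinarith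
          linarith
      · rcases le_or_gt u0 (-(sq3/2)) with hcase3 | hcase3
        · -- upper-left: exact point on arc with ψ = arccos u0 - 2π
          have harccos : 5 * π / 6 ≤ Real.arccos u0 := by
            by_contra hcon
            push_neg at hcon
            have h56 : Real.cos (5 * π / 6) = -(sq3/2) := by
              rw [show (5:ℝ) * π / 6 = π - π / 6 by ring, Real.cos_pi_sub,
                Real.cos_pi_div_six]
              rw [sq3]
            have hmono := Real.strictAntiOn_cos
              ⟨Real.arccos_nonneg u0, (Real.arccos_le_pi u0)⟩
              (⟨by positivity, by linarith⟩ : 5 * π / 6 ∈ Icc 0 π) hcon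
            rw [Real.cos_arccos hu0ge hu0le, h56] at hmono
            linarith
          refine harc (Real.arccos u0 - 2 * π) ?_ ?_ ?_ ?_
          · linarith
          · linarith [Real.arccos_le_pi u0]
          · rw [Real.cos_sub_two_pi]; exact Real.cos_arccos hu0ge hu0le
          · rw [Real.sin_sub_two_pi, Real.sin_arccos]
            have h1 : 1 - u0 ^ 2 = u1 ^ 2 := by linarith
            rw [h1, Real.sqrt_sq_eq_abs, abs_of_pos hcase1]
        · -- middle: use endpoint D, via IVT at t' = 1
          refine hIVT 1 ⟨zero_le_one, le_rfl⟩ ?_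
          have hval : f 1 = ip4 ib4 := by
            show gpath (ib4 * 1) = ip4 ib4
            rw [mul_one]
            exact gpath_on4 ⟨ib34.le, le_rfl⟩
          have h43 : ib4 - ib3 = 1 := by rw [ib3, ib4]; ring
          rw [hval, ip4, h43, inner_isbellPt, ← hu0, ← hu1]
          -- show 1 ≤ (1/2 - √3/2) u0 + (1/2 + √3/2) u1
          have hq : 0 ≤ (1/2 - u0) * (u0 + sq3/2) :=
            mul_nonneg (by linarith) (by linarith)
          have hb : 0 < (1/2 + sq3/2) * u1 := by
            have : 0 < 1/2 + sq3/2 := by linarith [sq3_pos]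
            positivity
          have ha2 : -(sq3/2) + 1/2 < 0 := by linarith [sq3_gt_one]
          have ha1 : -(1:ℝ)/2 < -(sq3/2) + 1/2 := by linarith [sq3_lt_two]
          have hrhs : 0 ≤ 1 - (-(sq3/2) + 1/2) * u0 := by
            nlinarith [mul_le_mul_of_nonpos_left hu0ge ha2.le]
          have hid : ((1/2 + sq3/2) * u1)^2 - (1 - (-(sq3/2) + 1/2) * u0)^2
              = 2*((1/2 - u0)*(u0 + sq3/2)) := by
            linear_combination sq3_sq * ((u1^2 - u0^2)/4) + hsum * (1 + sq3/2)
          have hsq : (1 - (-(sq3/2) + 1/2) * u0) ^ 2 ≤ ((1/2 + sq3/2) * u1) ^ 2 := by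
            linarith [hid, hq]
          have hfin : 1 - (-(sq3/2) + 1/2) * u0 ≤ (1/2 + sq3/2) * u1 := by
            have h1 := Real.sqrt_le_sqrt hsq
            rwa [Real.sqrt_sq hrhs, Real.sqrt_sq hb.le] at h1
          linarith [hfin]
end

section
/- Every continuous path f : [0,1] → ℝ² with f 0 = 0 whose image contains the unit circle centered at the origin (Metric.sphere (0 : ℝ²) 1 ⊆ Set.range f) has length eVariationOn f (Set.Icc 0 1) ≥ 1 + 2π. Consequently the exact optimal value of the search-for-one-point problem at distance 1 is 1 + 2π. -/
set_option maxHeartbeats 1000000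

open scoped ENNReal

open Real Set MeasureTheory
open scoped NNReal

section SearchAux

noncomputable def cc (θ : ℝ) : EuclideanSpace ℝ (Fin 2) := WithLp.toLp 2 ![Real.cos θ, Real.sin θ]

lemma cc_cont : Continuous cc := by
  apply (PiLp.continuous_toLp 2 _).comp
  apply continuous_pi
  intro i
  fin_cases i
  · exact Real.continuous_cos
  · exact Real.continuous_sin

lemma cc_norm (θ : ℝ) : ‖cc θ‖ = 1 := by
  simp only [cc, EuclideanSpace.norm_eq, PiLp.toLp_apply, Fin.sum_univ_two, Matrix.cons_val_zero,
    Matrix.cons_val_one, Matrix.head_cons, Real.norm_eq_abs, sq_abs]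
  rw [Real.cos_sq_add_sin_sq, Real.sqrt_one]

lemma cc_mem_sphere (θ : ℝ) : cc θ ∈ Metric.sphere (0 : EuclideanSpace ℝ (Fin 2)) 1 := by
  simp [cc_norm]

lemma cc_dist (α β : ℝ) : dist (cc α) (cc β) = 2 * |Real.sin ((α - β)/2)| := by
  rw [EuclideanSpace.dist_eq]
  simp only [cc, PiLp.toLp_apply, Fin.sum_univ_two, Matrix.cons_val_zero, Matrix.cons_val_one, Matrix.head_cons,
    Real.dist_eq, sq_abs]
  have h1 := Real.sin_sub_sin α β
  have h2 := Real.cos_sub_cos α β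
  have h3 := Real.sin_sq_add_cos_sq ((α + β)/2)
  have h4 : (Real.cos α - Real.cos β)^2 + (Real.sin α - Real.sin β)^2
      = (2 * |Real.sin ((α - β)/2)|)^2 := by
    rw [h1, h2]
    rw [show (2 * |Real.sin ((α - β)/2)|)^2 = 4 * Real.sin ((α-β)/2)^2 by
      rw [mul_pow, sq_abs]; ring]
    nlinarith [h3]
  rw [h4]
  exact Real.sqrt_sq (by positivity)

lemma cc_dist_le (α β : ℝ) : dist (cc α) (cc β) ≤ |α - β| := by
  rw [cc_dist]
  calc 2 * |Real.sin ((α - β)/2)| ≤ 2 * |(α - β)/2| :=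
        mul_le_mul_of_nonneg_left Real.abs_sin_le_abs (by norm_num)
    _ = |α - β| := by rw [abs_div]; simp; ring

lemma cc_eq_of {θ : ℝ} {p : EuclideanSpace ℝ (Fin 2)} (h0 : Real.cos θ = p 0)
    (h1 : Real.sin θ = p 1) : cc θ = p := by
  ext i
  fin_cases i
  · exact h0
  · exact h1



lemma sphere_subset_cc_image :
    Metric.sphere (0 : EuclideanSpace ℝ (Fin 2)) 1 ⊆ cc '' (Set.Ico 0 (2*π)) := by
  rintro p hp
  have hn : ‖p‖ = 1 := by simpa [dist_zero_right] using hp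
  set z : ℂ := ⟨p 0, p 1⟩ with hz
  have habs : ‖z‖ = 1 := by
    have h2 : ‖p‖ = Real.sqrt ((p 0)^2 + (p 1)^2) := by
      simp [EuclideanSpace.norm_eq, Fin.sum_univ_two, sq_abs]
    rw [Complex.norm_def, Complex.normSq_mk]
    rw [h2] at hn
    rw [← hn]; ring_nf
  have hz0 : z ≠ 0 := by
    intro h; rw [h] at habs; simp at habs
  have hc : Real.cos (Complex.arg z) = p 0 := by
    rw [Complex.cos_arg hz0, habs]; simp [hz]
  have hs : Real.sin (Complex.arg z) = p 1 := by
    rw [Complex.sin_arg, habs]; simp [hz]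
  have harg := Complex.arg_mem_Ioc z
  by_cases h0 : 0 ≤ Complex.arg z
  · exact ⟨Complex.arg z, ⟨h0, lt_of_le_of_lt harg.2 (by linarith [Real.pi_pos])⟩,
      cc_eq_of hc hs⟩
  · refine ⟨Complex.arg z + 2*π,
      ⟨by linarith [harg.1.le, Real.pi_pos], by linarith [harg.2, not_le.mp h0]⟩, ?_⟩
    exact cc_eq_of (by rw [Real.cos_add_two_pi]; exact hc) (by rw [Real.sin_add_two_pi]; exact hs)

lemma cc_inj_mod {α β : ℝ} (h : cc α = cc β) : ∃ k : ℤ, α = β + k * (2*π) := by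
  have h0 : Real.cos α = Real.cos β := congrFun (congrArg WithLp.ofLp h) 0
  have h1 : Real.sin α = Real.sin β := congrFun (congrArg WithLp.ofLp h) 1
  have he : Complex.exp (α * Complex.I) = Complex.exp (β * Complex.I) := by
    rw [Complex.exp_mul_I, Complex.exp_mul_I, ← Complex.ofReal_cos, ← Complex.ofReal_sin,
      ← Complex.ofReal_cos, ← Complex.ofReal_sin, h0, h1]
  rw [Complex.exp_eq_exp_iff_exists_int] at he
  obtain ⟨k, hk⟩ := he
  refine ⟨k, ?_⟩
  have h2 := congrArg Complex.im hk
  simpa using h2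

lemma cc_injOn : Set.InjOn cc (Set.Ico 0 (2*π)) := by
  rintro a ⟨ha0, ha1⟩ b ⟨hb0, hb1⟩ h
  obtain ⟨k, hk⟩ := cc_inj_mod h
  have hπ := Real.pi_pos
  have hd : (k : ℝ) * (2*π) = a - b := by linarith
  have hbound : |(k:ℝ)| < 1 := by
    rw [abs_lt]
    constructor <;> nlinarith [hd]
  have hk0 : k = 0 := by
    have hb2 := abs_lt.mp hbound
    have h1 : k < 1 := by exact_mod_cast hb2.2
    have h2 : -1 < k := by exact_mod_cast hb2.1
    omega
  rw [hk0] at hk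
  simpa using hk


-- H¹ of a preconnected set is at least the distance between two of its points


lemma ediam_le_hausdorff {X : Type*} [MetricSpace X] [MeasurableSpace X] [BorelSpace X]
    {s : Set X} (hs : IsPreconnected s) {x y : X} (hx : x ∈ s) (hy : y ∈ s) :
    ENNReal.ofReal (dist x y) ≤ μH[1] s := by
  have hlip : LipschitzWith 1 (dist x) := LipschitzWith.dist_right x
  have himg : μH[1] (dist x '' s) ≤ μH[1] s := by
    simpa using hlip.hausdorffMeasure_image_le (by norm_num : (0:ℝ) ≤ 1) s
  have hconn : IsPreconnected (dist x '' s) :=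
    hs.image _ (hlip.continuous.continuousOn)
  have h0 : (0:ℝ) ∈ dist x '' s := ⟨x, hx, dist_self x⟩
  have hd : dist x y ∈ dist x '' s := ⟨y, hy, rfl⟩
  have hIcc : Set.Icc (0:ℝ) (dist x y) ⊆ dist x '' s := hconn.Icc_subset h0 hd
  calc ENNReal.ofReal (dist x y) = volume (Set.Icc (0:ℝ) (dist x y)) := by
        rw [Real.volume_Icc]; simp
    _ = μH[1] (Set.Icc (0:ℝ) (dist x y)) := by rw [MeasureTheory.hausdorffMeasure_real]
    _ ≤ μH[1] (dist x '' s) := measure_mono hIcc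
    _ ≤ μH[1] s := himg

variable {X : Type*} [MetricSpace X] [MeasurableSpace X] [BorelSpace X]

lemma hausdorff_image_le_eVariationOn {f : ℝ → X} {a b : ℝ} (hab : a ≤ b) :
    μH[1] (f '' Set.Icc a b) ≤ eVariationOn f (Set.Icc a b) := by
  by_cases hbv : BoundedVariationOn f (Set.Icc a b)
  swap
  · rw [BoundedVariationOn, not_ne_iff] at hbv
    rw [hbv]; exact le_top
  set s := Set.Icc a b with hs
  have has : a ∈ s := ⟨le_refl a, hab⟩
  set v := variationOnFromTo f s a with hv
  set γ := naturalParameterization f s a with hγ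
  have hlbv : LocallyBoundedVariationOn f s := hbv.locallyBoundedVariationOn
  have hus : HasUnitSpeedOn γ (v '' s) := has_unit_speed_naturalParameterization f hlbv has
  -- γ is 1-Lipschitz on v '' s
  have hlip : LipschitzOnWith 1 γ (v '' s) := by
    intro x hx y hy
    rcases le_total x y with hxy | hxy
    · have h1 : x ∈ v '' s ∩ Set.Icc x y := ⟨hx, le_refl x, hxy⟩
      have h2 : y ∈ v '' s ∩ Set.Icc x y := ⟨hy, hxy, le_refl y⟩
      calc edist (γ x) (γ y) ≤ eVariationOn γ (v '' s ∩ Set.Icc x y) :=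
            eVariationOn.edist_le γ h1 h2
        _ = ENNReal.ofReal (1 * (y - x)) := hus hx hy
        _ ≤ 1 * edist x y := by
            rw [one_mul, one_mul, edist_dist, Real.dist_eq, abs_of_nonpos (by linarith : x - y ≤ 0)]
            rw [neg_sub]
    · have h1 : y ∈ v '' s ∩ Set.Icc y x := ⟨hy, le_refl y, hxy⟩
      have h2 : x ∈ v '' s ∩ Set.Icc y x := ⟨hx, hxy, le_refl x⟩
      calc edist (γ x) (γ y) = edist (γ y) (γ x) := edist_comm _ _
        _ ≤ eVariationOn γ (v '' s ∩ Set.Icc y x) := eVariationOn.edist_le γ h1 h2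
        _ = ENNReal.ofReal (1 * (x - y)) := hus hy hx
        _ ≤ 1 * edist x y := by
            rw [one_mul, one_mul, edist_dist, Real.dist_eq, abs_of_nonneg (by linarith : 0 ≤ x - y)]
  have himg : f '' s ⊆ γ '' (v '' s) := by
    rintro _ ⟨t, ht, rfl⟩
    refine ⟨v t, ⟨t, ht, rfl⟩, ?_⟩
    have := edist_naturalParameterization_eq_zero hlbv has ht
    rw [edist_eq_zero] at this
    exact this
  have hvs : v '' s ⊆ Set.Icc 0 ((eVariationOn f s).toReal) := by
    rintro _ ⟨t, ht, rfl⟩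
    refine ⟨variationOnFromTo.nonneg_of_le f s ht.1, ?_⟩
    show variationOnFromTo f s a t ≤ _
    rw [variationOnFromTo.eq_of_le f s ht.1]
    exact ENNReal.toReal_mono hbv (eVariationOn.mono f Set.inter_subset_left)
  calc μH[1] (f '' s) ≤ μH[1] (γ '' (v '' s)) := measure_mono himg
    _ ≤ (1:NNReal) ^ (1:ℝ) * μH[1] (v '' s) :=
        hlip.hausdorffMeasure_image_le (by norm_num)
    _ = μH[1] (v '' s) := by simp
    _ ≤ μH[1] (Set.Icc 0 ((eVariationOn f s).toReal)) := measure_mono hvs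
    _ = eVariationOn f s := by
        rw [MeasureTheory.hausdorffMeasure_real, Real.volume_Icc, sub_zero,
          ENNReal.ofReal_toReal hbv]

lemma sphere_haus_ge (n : ℕ) (hn : 2 ≤ n) {w : ℝ} (hw0 : 0 ≤ w) (hw : w < 2*π/n) :
    ENNReal.ofReal (n * (2 * Real.sin (w/2)))
      ≤ μH[1] (Metric.sphere (0 : EuclideanSpace ℝ (Fin 2)) 1) := by
  have hπ := Real.pi_pos
  have hn0 : (0:ℝ) < n := by exact_mod_cast Nat.lt_of_lt_of_le Nat.zero_lt_two hn
  have hn2 : (2:ℝ) ≤ n := by exact_mod_cast hn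
  set Δ : ℝ := 2*π/n with hΔdef
  have hΔ : 0 < Δ := by positivity
  have hnΔ : (n:ℝ) * Δ = 2*π := by rw [hΔdef]; field_simp
  have hΔle : Δ ≤ π := by rw [hΔdef, div_le_iff₀ hn0]; nlinarith
  set A : Fin n → Set (EuclideanSpace ℝ (Fin 2)) :=
    fun i => cc '' (Set.Ico ((i:ℝ)*Δ) ((i:ℝ)*Δ + Δ)) with hA
  have hsub : ∀ i : Fin n, Set.Ico ((i:ℝ)*Δ) ((i:ℝ)*Δ + Δ) ⊆ Set.Ico 0 (2*π) := by
    intro i θ hθ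
    have hi : ((i:ℝ) + 1) ≤ n := by exact_mod_cast i.2
    constructor
    · have : 0 ≤ (i:ℝ)*Δ := by positivity
      linarith [hθ.1]
    · have h2 : (i:ℝ)*Δ + Δ ≤ (n:ℝ)*Δ := by nlinarith
      linarith [hθ.2, hnΔ ▸ h2]
  have hdisj : Pairwise (Function.onFun Disjoint A) := by
    intro i j hij
    rw [Function.onFun, Set.disjoint_left]
    rintro p ⟨α, hα, rfl⟩ ⟨β, hβ, hba⟩
    have hab : β = α := cc_injOn (hsub j hβ) (hsub i hα) hba
    subst hab
    apply hij
    have h1 : (i:ℝ) < (j:ℝ) + 1 := by nlinarith [hα.1, hα.2, hβ.1, hβ.2]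
    have h2 : (j:ℝ) < (i:ℝ) + 1 := by nlinarith [hα.1, hα.2, hβ.1, hβ.2]
    have h1' : (i:ℕ) < (j:ℕ) + 1 := by exact_mod_cast h1
    have h2' : (j:ℕ) < (i:ℕ) + 1 := by exact_mod_cast h2
    exact Fin.ext (by omega)
  have hioo : ∀ i : Fin n, A i = (cc '' Set.Icc ((i:ℝ)*Δ) ((i:ℝ)*Δ + Δ)) \ {cc ((i:ℝ)*Δ + Δ)} := by
    intro i
    have hi : ((i:ℝ) + 1) ≤ n := by exact_mod_cast i.2
    ext p
    constructor
    · rintro ⟨α, hα, rfl⟩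
      refine ⟨⟨α, ⟨hα.1, hα.2.le⟩, rfl⟩, ?_⟩
      intro hmem
      rw [Set.mem_singleton_iff] at hmem
      have hαm := hsub i hα
      rcases lt_or_eq_of_le (show ((i:ℝ)*Δ + Δ) ≤ 2*π by nlinarith) with hlt | heq
      · have : α = (i:ℝ)*Δ + Δ := cc_injOn hαm ⟨by positivity, hlt⟩ hmem
        linarith [hα.2]
      · have hcc0 : cc ((i:ℝ)*Δ + Δ) = cc 0 := by
          rw [heq]; ext j; fin_cases j <;> simp [cc]
        rw [hcc0] at hmem
        have h0 : α = 0 := cc_injOn hαm ⟨le_refl 0, by positivity⟩ hmem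
        have hiΔ0 : (i:ℝ)*Δ = 0 := le_antisymm (h0 ▸ hα.1) (by positivity)
        rw [hiΔ0, zero_add] at heq
        linarith
    · rintro ⟨⟨α, hα, rfl⟩, hne⟩
      rcases lt_or_eq_of_le hα.2 with hlt | heq
      · exact ⟨α, ⟨hα.1, hlt⟩, rfl⟩
      · exact absurd (by rw [heq]; exact rfl) hne
  have hmeas : ∀ i : Fin n, MeasurableSet (A i) := by
    intro i
    rw [hioo i]
    exact ((isCompact_Icc.image cc_cont).measurableSet).diff (measurableSet_singleton _)
  have hcover : Metric.sphere (0 : EuclideanSpace ℝ (Fin 2)) 1 = ⋃ i, A i := by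
    apply Set.Subset.antisymm
    · intro p hp
      obtain ⟨θ, hθ, rfl⟩ := sphere_subset_cc_image hp
      have hθΔ : θ < n * Δ := by rw [hnΔ]; exact hθ.2
      set k : ℕ := ⌊θ / Δ⌋₊ with hk
      have hdiv0 : 0 ≤ θ / Δ := div_nonneg hθ.1 hΔ.le
      have hkn : k < n := by
        rw [hk]
        rw [Nat.floor_lt hdiv0]
        rw [div_lt_iff₀ hΔ]
        linarith
      have hlow : (k:ℝ) * Δ ≤ θ := by
        rw [hk]
        have := Nat.floor_le hdiv0
        calc (⌊θ / Δ⌋₊ : ℝ) * Δ ≤ (θ/Δ) * Δ := by nlinarith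
          _ = θ := by field_simp
      have hhigh : θ < (k:ℝ) * Δ + Δ := by
        have := Nat.lt_floor_add_one (θ / Δ)
        have h2 : θ / Δ * Δ < ((⌊θ / Δ⌋₊:ℝ) + 1) * Δ := by nlinarith
        rw [hk]
        calc θ = θ / Δ * Δ := by field_simp
          _ < ((⌊θ / Δ⌋₊:ℝ) + 1) * Δ := h2
          _ = (⌊θ / Δ⌋₊:ℝ) * Δ + Δ := by ring
      exact Set.mem_iUnion.mpr ⟨⟨k, hkn⟩, ⟨θ, ⟨hlow, hhigh⟩, rfl⟩⟩
    · refine Set.iUnion_subset fun i => ?_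
      rintro p ⟨α, _, rfl⟩
      exact cc_mem_sphere α
  have hlower : ∀ i : Fin n, ENNReal.ofReal (2 * Real.sin (w/2)) ≤ μH[1] (A i) := by
    intro i
    have hconn : IsPreconnected (A i) := (isPreconnected_Ico).image cc (cc_cont.continuousOn)
    have hx : cc ((i:ℝ)*Δ) ∈ A i := ⟨_, ⟨le_refl _, by linarith⟩, rfl⟩
    have hy : cc ((i:ℝ)*Δ + w) ∈ A i := ⟨_, ⟨by linarith, by linarith [hΔdef ▸ hw]⟩, rfl⟩
    calc ENNReal.ofReal (2 * Real.sin (w/2))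
        ≤ ENNReal.ofReal (dist (cc ((i:ℝ)*Δ)) (cc ((i:ℝ)*Δ + w))) := by
          apply ENNReal.ofReal_le_ofReal
          rw [cc_dist]
          have : ((i:ℝ)*Δ - ((i:ℝ)*Δ + w))/2 = -(w/2) := by ring
          rw [this, Real.sin_neg, abs_neg]
          have := le_abs_self (Real.sin (w/2))
          nlinarith [abs_nonneg (Real.sin (w/2))]
      _ ≤ μH[1] (A i) := ediam_le_hausdorff hconn hx hy
  calc ENNReal.ofReal (n * (2 * Real.sin (w/2)))
      = ∑ _i : Fin n, ENNReal.ofReal (2 * Real.sin (w/2)) := by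
        rw [Finset.sum_const, Finset.card_univ, Fintype.card_fin, nsmul_eq_mul,
          ← ENNReal.ofReal_natCast n, ← ENNReal.ofReal_mul (by positivity)]
    _ ≤ ∑ i : Fin n, μH[1] (A i) := Finset.sum_le_sum fun i _ => hlower i
    _ = ∑' i : Fin n, μH[1] (A i) := (tsum_fintype _).symm
    _ = μH[1] (⋃ i, A i) := (measure_iUnion hdisj hmeas).symm
    _ = μH[1] (Metric.sphere (0 : EuclideanSpace ℝ (Fin 2)) 1) := by rw [← hcover]

lemma sphere_haus : ENNReal.ofReal (2*π)
    ≤ μH[1] (Metric.sphere (0 : EuclideanSpace ℝ (Fin 2)) 1) := by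
  have hπ := Real.pi_pos
  set μ := μH[1] (Metric.sphere (0 : EuclideanSpace ℝ (Fin 2)) 1) with hμdef
  by_cases hμ : μ = ⊤
  · rw [hμ]; exact le_top
  rw [ENNReal.ofReal_le_iff_le_toReal hμ]
  apply le_of_forall_sub_le
  intro ε hε
  obtain ⟨n, hn⟩ := exists_nat_gt (max 4 ((1+π^3)/ε))
  have hn4 : (4:ℝ) < n := lt_of_le_of_lt (le_max_left _ _) hn
  have hnε : (1+π^3)/ε < n := lt_of_le_of_lt (le_max_right _ _) hn
  have hn0 : (0:ℝ) < n := by linarith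
  have hn2 : 2 ≤ n := by exact_mod_cast (by linarith : (2:ℝ) ≤ n)
  obtain ⟨w, hwdef⟩ : ∃ w : ℝ, w = 2*π/n - 1/n^2 := ⟨_, rfl⟩
  have hw0 : 0 ≤ w := by
    rw [hwdef]
    rw [sub_nonneg, div_le_div_iff₀ (by positivity) (by positivity)]
    have hnn : (n:ℝ) ≤ (n:ℝ)^2 := by nlinarith
    have a1 : π*(n:ℝ) ≤ π*(n:ℝ)^2 := mul_le_mul_of_nonneg_left hnn hπ.le
    have a2 : (0:ℝ) ≤ (2*π-1)*n := mul_nonneg (by linarith [Real.pi_gt_three]) hn0.le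
    nlinarith
  have hw : w < 2*π/n := by
    rw [hwdef]
    exact sub_lt_self _ (by positivity)
  have key := sphere_haus_ge n hn2 hw0 hw
  have hsin0 : 0 ≤ Real.sin (w/2) := by
    apply Real.sin_nonneg_of_nonneg_of_le_pi (by linarith)
    have : 2*π/(n:ℝ) ≤ π := by rw [div_le_iff₀ hn0]; nlinarith
    linarith
  have hle : (n:ℝ) * (2 * Real.sin (w/2)) ≤ μ.toReal := by
    rw [← ENNReal.ofReal_le_iff_le_toReal hμ]; exact key
  -- now the analytic estimate
  obtain ⟨x, hx⟩ : ∃ x : ℝ, x = w/2 := ⟨_, rfl⟩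
  have hx0 : 0 < x := by
    rw [hx, hwdef]
    have h1 : 1/(n:ℝ)^2 < 2*π/n := by
      rw [div_lt_div_iff₀ (by positivity) (by positivity)]
      have hnn : (n:ℝ) ≤ (n:ℝ)^2 := by nlinarith
      have a1 : π*(n:ℝ) ≤ π*(n:ℝ)^2 := mul_le_mul_of_nonneg_left hnn hπ.le
      have a2 : (0:ℝ) < (2*π-1)*n := mul_pos (by linarith [Real.pi_gt_three]) hn0
      nlinarith
    linarith
  have hxle : x ≤ π/n := by
    rw [hx, hwdef]
    have h9 : (0:ℝ) ≤ 1/(n:ℝ)^2 := by positivity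
    ring_nf
    ring_nf at h9 ⊢
    linarith
  have hx1 : x ≤ 1 := le_trans hxle (by rw [div_le_one hn0]; nlinarith [Real.pi_lt_d2])
  have hsin := Real.sin_gt_sub_cube hx0
  rw [← hx] at hle
  have hx3 : x^3 ≤ π^3/n^3 := by
    have h10 : x^3 ≤ (π/n)^3 := pow_le_pow_left₀ hx0.le hxle 3
    calc x^3 ≤ (π/n)^3 := h10
      _ = π^3/n^3 := by rw [div_pow]
  have h1 : 2*(n:ℝ)*x - (n:ℝ)*x^3/2 ≤ (n:ℝ) * (2 * Real.sin x) := by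
    have h11 := mul_lt_mul_of_pos_left hsin (show (0:ℝ) < 2*n by positivity)
    nlinarith [h11, mul_pos hn0 (pow_pos hx0 3)]
  have h2 : 2*(n:ℝ)*x = 2*π - 1/n := by
    rw [hx, hwdef]; field_simp
  have h3 : (n:ℝ)*x^3/2 ≤ π^3/n := by
    have h4 : (n:ℝ)*x^3 ≤ n * (π^3/n^3) := by nlinarith
    have h5 : (n:ℝ) * (π^3/n^3) = π^3/n^2 := by field_simp
    have h6 : π^3/(n:ℝ)^2 ≤ π^3/n := by
      apply div_le_div_of_nonneg_left (by positivity) hn0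
      nlinarith
    have hpos : (0:ℝ) ≤ π^3/(n:ℝ) := by positivity
    ring_nf at h4 h5 h6 hpos ⊢
    linarith
  have h7 : (1+π^3)/(n:ℝ) < ε := by
    rw [div_lt_iff₀ hn0]
    rw [div_lt_iff₀ hε] at hnε
    nlinarith
  have h8 : 1/(n:ℝ) + π^3/n = (1+π^3)/n := by field_simp
  linarith

noncomputable def gg : ℝ → EuclideanSpace ℝ (Fin 2) := fun t =>
  if t ≤ 1/(1+2*π) then ((1+2*π)*t) • cc 0 else cc ((1+2*π)*t - 1)

lemma c_pos : (0:ℝ) < 1 + 2*π := by linarith [Real.pi_pos]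

lemma gg_zero : gg 0 = 0 := by
  have h : (0:ℝ) ≤ 1/(1+2*π) := by positivity
  simp only [gg, if_pos h, mul_zero, zero_smul]

lemma gg_dist {s t : ℝ} (hst : s ≤ t) : dist (gg s) (gg t) ≤ (1+2*π) * (t - s) := by
  have hπ := Real.pi_pos
  have hc := c_pos
  have hT : (1+2*π) * (1/(1+2*π)) = 1 := by field_simp
  have key : ∀ u, 1/(1+2*π) ≤ u → dist (cc 0) (gg u) ≤ (1+2*π) * (u - 1/(1+2*π)) := by
    intro u hu
    rcases eq_or_lt_of_le hu with rfl | hu'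
    · simp only [gg, le_refl, if_pos, hT, one_smul]
      simp
    · have : ¬ (u ≤ 1/(1+2*π)) := not_le.mpr hu'
      simp only [gg, this, if_false]
      calc dist (cc 0) (cc ((1+2*π)*u - 1)) ≤ |0 - ((1+2*π)*u - 1)| := cc_dist_le _ _
        _ = (1+2*π) * (u - 1/(1+2*π)) := by
            rw [abs_of_nonpos]
            · field_simp; ring
            · nlinarith
  by_cases hs : s ≤ 1/(1+2*π) <;> by_cases ht : t ≤ 1/(1+2*π)
  · simp only [gg, hs, ht, if_pos]
    rw [dist_eq_norm, ← sub_smul, norm_smul, cc_norm, mul_one, Real.norm_eq_abs,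
      abs_of_nonpos (by nlinarith)]
    ring_nf
    nlinarith
  · have h1 : dist (gg s) (gg ((1:ℝ)/(1+2*π))) ≤ (1+2*π) * (1/(1+2*π) - s) := by
      simp only [gg, hs, le_refl, if_pos]
      rw [dist_eq_norm, ← sub_smul, norm_smul, cc_norm, mul_one, Real.norm_eq_abs,
        abs_of_nonpos (by nlinarith)]
      ring_nf
      nlinarith
    have h2 : gg ((1:ℝ)/(1+2*π)) = cc 0 := by
      simp only [gg, le_refl, if_pos, hT]
      norm_num
    calc dist (gg s) (gg t) ≤ dist (gg s) (gg ((1:ℝ)/(1+2*π))) + dist (gg ((1:ℝ)/(1+2*π))) (gg t) :=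
          dist_triangle _ _ _
      _ ≤ (1+2*π) * (1/(1+2*π) - s) + (1+2*π) * (t - 1/(1+2*π)) := by
          refine add_le_add h1 ?_
          rw [h2]
          exact key t (le_of_not_ge ht)
      _ = (1+2*π) * (t - s) := by ring
  · exact absurd (le_trans hst ht) hs
  · have hs' := not_le.mp hs
    have ht' := not_le.mp ht
    simp only [gg, hs, ht, if_false]
    calc dist (cc ((1+2*π)*s - 1)) (cc ((1+2*π)*t - 1)) ≤ |((1+2*π)*s - 1) - ((1+2*π)*t - 1)| :=
          cc_dist_le _ _
      _ = (1+2*π) * (t - s) := by rw [abs_of_nonpos (by nlinarith)]; ring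

lemma gg_lipschitz : LipschitzWith (Real.toNNReal (1+2*π)) gg := by
  apply LipschitzWith.of_dist_le_mul
  intro x y
  have hc := c_pos
  rw [Real.coe_toNNReal _ hc.le]
  rcases le_total x y with h | h
  · have hd : y - x ≤ dist x y := by rw [Real.dist_eq]; rw [abs_sub_comm]; exact le_abs_self _
    calc dist (gg x) (gg y) ≤ (1+2*π) * (y - x) := gg_dist h
      _ ≤ (1+2*π) * dist x y := mul_le_mul_of_nonneg_left hd hc.le
  · have hd : x - y ≤ dist x y := by rw [Real.dist_eq]; exact le_abs_self _
    calc dist (gg x) (gg y) = dist (gg y) (gg x) := dist_comm _ _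
      _ ≤ (1+2*π) * (x - y) := gg_dist h
      _ ≤ (1+2*π) * dist x y := mul_le_mul_of_nonneg_left hd hc.le

lemma gg_covers : Metric.sphere (0 : EuclideanSpace ℝ (Fin 2)) 1 ⊆ gg '' (Set.Icc 0 1) := by
  intro p hp
  have hπ := Real.pi_pos
  have hc := c_pos
  obtain ⟨θ, hθ, rfl⟩ := sphere_subset_cc_image hp
  refine ⟨(θ + 1)/(1+2*π), ⟨div_nonneg (by linarith [hθ.1]) hc.le, ?_⟩, ?_⟩
  · rw [div_le_one hc]; linarith [hθ.2]
  · by_cases h : (θ + 1)/(1+2*π) ≤ 1/(1+2*π)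
    · have hθ0 : θ ≤ 0 := by
        rw [div_le_div_iff_of_pos_right] at h
        · linarith
        · exact hc
      have : θ = 0 := le_antisymm hθ0 hθ.1
      subst this
      simp only [gg, h, if_pos]
      rw [show (1+2*π) * ((0 + 1)/(1+2*π)) = 1 by field_simp; norm_num]
      simp
    · simp only [gg, h, if_false]
      congr 1
      field_simp
      ring

lemma gg_eVar_le : eVariationOn gg (Set.Icc 0 1) ≤ ENNReal.ofReal (1 + 2*π) := by
  have hc := c_pos
  have h1 : eVariationOn (gg ∘ id) (Set.Icc (0:ℝ) 1)
      ≤ (↑(Real.toNNReal (1+2*π)) : ℝ≥0∞) * eVariationOn id (Set.Icc (0:ℝ) 1) :=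
    LipschitzOnWith.comp_eVariationOn_le
      (gg_lipschitz.lipschitzOnWith : LipschitzOnWith _ gg (Set.Icc (0:ℝ) 1))
      (Set.mapsTo_id _)
  have h2 : eVariationOn id (Set.Icc (0:ℝ) 1) ≤ ENNReal.ofReal 1 := by
    have hm : MonotoneOn (id : ℝ → ℝ) (Set.Icc (0:ℝ) 1) := fun a _ b _ h => h
    have := hm.eVariationOn_le (Set.left_mem_Icc.mpr zero_le_one) (Set.right_mem_Icc.mpr zero_le_one)
    simpa using this
  calc eVariationOn gg (Set.Icc 0 1) = eVariationOn (gg ∘ id) (Set.Icc 0 1) := rfl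
    _ ≤ (↑(Real.toNNReal (1+2*π)) : ℝ≥0∞) * eVariationOn id (Set.Icc (0:ℝ) 1) := h1
    _ ≤ (↑(Real.toNNReal (1+2*π)) : ℝ≥0∞) * ENNReal.ofReal 1 := mul_le_mul_right h2 _
    _ = ENNReal.ofReal (1+2*π) := by rw [ENNReal.ofReal_one, mul_one]; rfl


end SearchAux

/-- Every path from the origin covering the unit circle has length at least 1 + 2π; hence
the optimal value of the search-for-one-point problem at distance 1 is exactly 1 + 2π. -/
theorem path_covering_unit_circle_length_ge :
    (∀ f : ℝ → EuclideanSpace ℝ (Fin 2),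
      ContinuousOn f (Set.Icc 0 1) → f 0 = 0 →
      Metric.sphere (0 : EuclideanSpace ℝ (Fin 2)) 1 ⊆ f '' Set.Icc 0 1 →
      ENNReal.ofReal (1 + 2 * Real.pi) ≤ eVariationOn f (Set.Icc 0 1)) ∧
    sInf {L : ℝ≥0∞ | ∃ f : ℝ → EuclideanSpace ℝ (Fin 2),
        ContinuousOn f (Set.Icc 0 1) ∧ f 0 = 0 ∧
        Metric.sphere (0 : EuclideanSpace ℝ (Fin 2)) 1 ⊆ f '' Set.Icc 0 1 ∧
        L = eVariationOn f (Set.Icc 0 1)} = ENNReal.ofReal (1 + 2 * Real.pi) := by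
  have hπ := Real.pi_pos
  have part1 : ∀ f : ℝ → EuclideanSpace ℝ (Fin 2),
      ContinuousOn f (Set.Icc 0 1) → f 0 = 0 →
      Metric.sphere (0 : EuclideanSpace ℝ (Fin 2)) 1 ⊆ f '' Set.Icc 0 1 →
      ENNReal.ofReal (1 + 2 * Real.pi) ≤ eVariationOn f (Set.Icc 0 1) := by
    intro f hf hf0 hcov
    set S := {t : ℝ | t ∈ Set.Icc (0:ℝ) 1 ∧ ‖f t‖ = 1} with hS
    have hSsub : S ⊆ Set.Icc (0:ℝ) 1 := fun t ht => ht.1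
    have hScl : IsClosed S := by
      have h1 : IsClosed (Set.Icc (0:ℝ) 1 ∩ (fun t => ‖f t‖) ⁻¹' {1}) :=
        ContinuousOn.preimage_isClosed_of_isClosed hf.norm isClosed_Icc isClosed_singleton
      have h2 : S = Set.Icc (0:ℝ) 1 ∩ (fun t => ‖f t‖) ⁻¹' {1} := by
        ext t; simp [hS]
      rw [h2]; exact h1
    have hScomp : IsCompact S := isCompact_Icc.of_isClosed_subset hScl hSsub
    have hSne : S.Nonempty := by
      obtain ⟨s, hs, hfs⟩ := hcov (cc_mem_sphere 0)
      exact ⟨s, hs, by rw [hfs, cc_norm]⟩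
    set t₀ := sInf S with ht₀def
    have ht₀S : t₀ ∈ S := hScomp.sInf_mem hSne
    have ht₀ : t₀ ∈ Set.Icc (0:ℝ) 1 := ht₀S.1
    have hft₀ : ‖f t₀‖ = 1 := ht₀S.2
    have hmin : ∀ s ∈ S, t₀ ≤ s := fun s hs => csInf_le hScomp.bddBelow hs
    have hcov2 : Metric.sphere (0 : EuclideanSpace ℝ (Fin 2)) 1 ⊆ f '' Set.Icc t₀ 1 := by
      intro p hp
      obtain ⟨s, hs, rfl⟩ := hcov hp
      have hnorm : ‖f s‖ = 1 := by simpa [dist_zero_right] using hp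
      exact ⟨s, ⟨hmin s ⟨hs, hnorm⟩, hs.2⟩, rfl⟩
    have h1 : ENNReal.ofReal 1 ≤ eVariationOn f (Set.Icc 0 t₀) := by
      have he := eVariationOn.edist_le f (Set.left_mem_Icc.mpr ht₀.1) (Set.right_mem_Icc.mpr ht₀.1)
      calc ENNReal.ofReal 1 = edist (f 0) (f t₀) := by
            rw [hf0, edist_dist, dist_comm, dist_zero_right, hft₀]
        _ ≤ eVariationOn f (Set.Icc 0 t₀) := he
    have h2 : ENNReal.ofReal (2*π) ≤ eVariationOn f (Set.Icc t₀ 1) :=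
      le_trans sphere_haus (le_trans (measure_mono hcov2)
        (hausdorff_image_le_eVariationOn ht₀.2))
    have hadd := eVariationOn.Icc_add_Icc f (s := Set.univ) ht₀.1 ht₀.2 (Set.mem_univ t₀)
    simp only [Set.univ_inter] at hadd
    calc ENNReal.ofReal (1 + 2*π) = ENNReal.ofReal 1 + ENNReal.ofReal (2*π) := by
          rw [← ENNReal.ofReal_add (by norm_num) (by positivity)]
      _ ≤ eVariationOn f (Set.Icc 0 t₀) + eVariationOn f (Set.Icc t₀ 1) := add_le_add h1 h2
      _ = eVariationOn f (Set.Icc 0 1) := hadd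
  refine ⟨part1, ?_⟩
  have hggcont : ContinuousOn gg (Set.Icc 0 1) := gg_lipschitz.continuous.continuousOn
  have heq : eVariationOn gg (Set.Icc 0 1) = ENNReal.ofReal (1 + 2*π) :=
    le_antisymm gg_eVar_le (part1 gg hggcont gg_zero gg_covers)
  apply le_antisymm
  · have hmem : eVariationOn gg (Set.Icc 0 1) ∈ {L : ℝ≥0∞ | ∃ f : ℝ → EuclideanSpace ℝ (Fin 2),
        ContinuousOn f (Set.Icc 0 1) ∧ f 0 = 0 ∧
        Metric.sphere (0 : EuclideanSpace ℝ (Fin 2)) 1 ⊆ f '' Set.Icc 0 1 ∧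
        L = eVariationOn f (Set.Icc 0 1)} := ⟨gg, hggcont, gg_zero, gg_covers, rfl⟩
    exact heq ▸ sInf_le hmem
  · apply le_sInf
    rintro L ⟨f, hfc, hf0, hcv, rfl⟩
    exact part1 f hfc hf0 hcv
end

section
/- Fix n ≥ 2 and a permutation σ of Fin n. Then σ is a single n-cycle (σ.IsCycle and σ.support = Finset.univ) if and only if there exists a function u : Fin n → ℝ such that for all i : Fin n with i ≠ 0 and σ i ≠ 0 one has u i + 1 ≤ u (σ i). (Correctness of the Miller–Tucker–Zemlin subtour-elimination constraints: a doubly-assigned 0–1 matrix admits MTZ auxiliary variables exactly when it encodes a single tour through all points.) -/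
/-- Correctness of the Miller–Tucker–Zemlin subtour-elimination constraints: a permutation is
a single `n`-cycle iff it admits MTZ auxiliary variables. -/
theorem mtz_constraints_iff_single_cycle
    (n : ℕ) (hn : 2 ≤ n) (σ : Equiv.Perm (Fin n)) :
    (σ.IsCycle ∧ σ.support = Finset.univ) ↔
      ∃ u : Fin n → ℝ, ∀ i : Fin n,
        i ≠ (⟨0, by omega⟩ : Fin n) → σ i ≠ (⟨0, by omega⟩ : Fin n) →
        u i + 1 ≤ u (σ i) := by
  set z : Fin n := (⟨0, by omega⟩ : Fin n) with hz
  constructor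
  · rintro ⟨hc, hs⟩
    have hzs : σ z ≠ z := by
      have : z ∈ σ.support := by rw [hs]; exact Finset.mem_univ z
      exact Equiv.Perm.mem_support.mp this
    have H : ∀ i : Fin n, ∃ k : ℕ, (σ ^ k) z = i := by
      intro i
      have his : σ i ≠ i := by
        have : i ∈ σ.support := by rw [hs]; exact Finset.mem_univ i
        exact Equiv.Perm.mem_support.mp this
      exact hc.exists_pow_eq hzs his
    refine ⟨fun i => (Nat.find (H i) : ℝ), ?_⟩
    intro i hi hsi
    set k := Nat.find (H i) with hk
    have hki : (σ ^ k) z = i := Nat.find_spec (H i)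
    set k' := Nat.find (H (σ i)) with hk'
    have hki' : (σ ^ k') z = σ i := Nat.find_spec (H (σ i))
    have hk'pos : k' ≠ 0 := by
      intro h0
      rw [h0] at hki'
      simp at hki'
      exact hsi hki'.symm
    have hle : k + 1 ≤ k' := by
      by_contra hlt
      push_neg at hlt
      have h1 : 1 ≤ k' := Nat.one_le_iff_ne_zero.mpr hk'pos
      have hprev : (σ ^ (k' - 1)) z = i := by
        apply σ.injective
        have h2 : σ ((σ ^ (k' - 1)) z) = (σ ^ (k' - 1 + 1)) z := by
          rw [pow_succ', Equiv.Perm.mul_apply]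
        rw [h2, Nat.sub_add_cancel h1, hki']
      have : Nat.find (H i) ≤ k' - 1 := Nat.find_le hprev
      omega
    have hge : k' ≤ k + 1 :=
      Nat.find_le (show (σ ^ (k + 1)) z = σ i by rw [pow_succ', Equiv.Perm.mul_apply, hki])
    have hkeq : k' = k + 1 := le_antisymm hge hle
    show (k : ℝ) + 1 ≤ (k' : ℝ)
    rw [hkeq]
    push_cast
    norm_num
  · rintro ⟨u, hu⟩
    -- main lemma: every point reaches z
    have key : ∀ j : Fin n, ∃ k : ℕ, (σ ^ k) j = z := by
      intro j
      by_contra hnot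
      push_neg at hnot
      have step : ∀ m : ℕ, u j + m ≤ u ((σ ^ m) j) := by
        intro m
        induction m with
        | zero => simp
        | succ m ih =>
          have h1 : (σ ^ m) j ≠ z := hnot m
          have h2 : σ ((σ ^ m) j) ≠ z := by
            have := hnot (m + 1)
            rwa [pow_succ', Equiv.Perm.mul_apply] at this
          have h3 := hu ((σ ^ m) j) h1 h2
          rw [pow_succ', Equiv.Perm.mul_apply]
          have h4 : ((m + 1 : ℕ) : ℝ) = (m : ℝ) + 1 := by push_cast; ring
          rw [h4]
          linarith
      have ho : 0 < orderOf σ := orderOf_pos σ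
      have hfix : (σ ^ orderOf σ) j = j := by
        rw [pow_orderOf_eq_one]; rfl
      have := step (orderOf σ)
      rw [hfix] at this
      have : (orderOf σ : ℝ) ≤ 0 := by linarith
      have : (0:ℝ) < orderOf σ := by exact_mod_cast ho
      linarith
    have hsupp : σ.support = Finset.univ := by
      apply Finset.eq_univ_iff_forall.mpr
      intro i
      rw [Equiv.Perm.mem_support]
      intro hfix
      have hfixk : ∀ k : ℕ, (σ ^ k) i = i := by
        intro k
        induction k with
        | zero => rfl
        | succ k ih => rw [pow_succ', Equiv.Perm.mul_apply, ih, hfix]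
      -- so i = z by key
      obtain ⟨k, hk⟩ := key i
      rw [hfixk k] at hk
      subst hk
      -- σ fixes z; take j ≠ z
      have h1n : (1 : ℕ) < n := by omega
      set j : Fin n := ⟨1, h1n⟩ with hj
      obtain ⟨k, hk⟩ := key j
      have hback : ∀ m : ℕ, ∀ x : Fin n, (σ ^ m) x = z → x = z := by
        intro m
        induction m with
        | zero => intro x hx; simpa using hx
        | succ m ih =>
          intro x hx
          rw [pow_succ, Equiv.Perm.mul_apply] at hx
          have h5 := ih (σ x) hx
          have h6 : σ x = σ z := by rw [h5, hfix]
          exact σ.injective h6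
      have : j = z := hback k j hk
      have h8 := congrArg Fin.val this
      simp [hj, hz] at h8
    refine ⟨?_, hsupp⟩
    have hzs : σ z ≠ z := by
      have : z ∈ σ.support := by rw [hsupp]; exact Finset.mem_univ z
      exact Equiv.Perm.mem_support.mp this
    refine ⟨z, hzs, ?_⟩
    intro y hy
    obtain ⟨k, hk⟩ := key y
    exact (Equiv.Perm.SameCycle.symm ⟨k, hk⟩)
end

section
/- Let f : [0,1] → ℝ² be a continuous path with eVariationOn f (Set.Icc 0 1) < 2. Then there exists v ∈ ℝ² such that ‖f t − v‖ < 1 for all t ∈ [0,1]; that is, some translate of the path lies entirely in the open unit disk and hence never meets the unit circle. (No path of length less than 2 can guarantee escape from the unit-disk forest, so the diameter is optimal.) -/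
/-- No path of length less than 2 can guarantee escape from the unit-disk forest: some
translate of it lies entirely in the open unit disk. -/
theorem short_path_fits_in_open_unit_disk
    (f : ℝ → EuclideanSpace ℝ (Fin 2)) (hf : ContinuousOn f (Set.Icc 0 1))
    (hlen : eVariationOn f (Set.Icc 0 1) < 2) :
    ∃ v : EuclideanSpace ℝ (Fin 2), ∀ t ∈ Set.Icc (0:ℝ) 1, ‖f t - v‖ < 1 := by
  refine ⟨(2:ℝ)⁻¹ • (f 0 + f 1), fun t ht => ?_⟩
  obtain ⟨ht0, ht1⟩ := ht
  have e1 : edist (f t) (f 0) ≤ eVariationOn f (Set.Icc 0 t) :=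
    eVariationOn.edist_le f ⟨ht0, le_rfl⟩ ⟨le_rfl, ht0⟩
  have e2 : edist (f t) (f 1) ≤ eVariationOn f (Set.Icc t 1) :=
    eVariationOn.edist_le f ⟨le_rfl, ht1⟩ ⟨ht1, le_rfl⟩
  have hadd := eVariationOn.Icc_add_Icc f (s := Set.univ) ht0 ht1 (Set.mem_univ t)
  simp only [Set.univ_inter] at hadd
  have hsum : edist (f t) (f 0) + edist (f t) (f 1) < 2 := by
    calc edist (f t) (f 0) + edist (f t) (f 1)
        ≤ eVariationOn f (Set.Icc 0 t) + eVariationOn f (Set.Icc t 1) := add_le_add e1 e2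
      _ = eVariationOn f (Set.Icc 0 1) := hadd
      _ < 2 := hlen
  have h1 : edist (f t) (f 0) ≠ ⊤ := edist_ne_top _ _
  have h2 : edist (f t) (f 1) ≠ ⊤ := edist_ne_top _ _
  have hd : dist (f t) (f 0) + dist (f t) (f 1) < 2 := by
    have := (ENNReal.toReal_lt_toReal (by finiteness) (by norm_num)).2 hsum
    rwa [ENNReal.toReal_add h1 h2, ENNReal.toReal_ofNat, edist_dist, edist_dist,
      ENNReal.toReal_ofReal dist_nonneg, ENNReal.toReal_ofReal dist_nonneg] at this
  have key : f t - (2:ℝ)⁻¹ • (f 0 + f 1) = (2:ℝ)⁻¹ • ((f t - f 0) + (f t - f 1)) := by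
    module
  rw [key, norm_smul]
  have := norm_add_le (f t - f 0) (f t - f 1)
  rw [show ‖f t - f 0‖ = dist (f t) (f 0) from (dist_eq_norm _ _).symm,
    show ‖f t - f 1‖ = dist (f t) (f 1) from (dist_eq_norm _ _).symm] at this
  have : ‖(f t - f 0) + (f t - f 1)‖ < 2 := lt_of_le_of_lt this hd
  calc ‖(2:ℝ)⁻¹‖ * ‖(f t - f 0) + (f t - f 1)‖
      < ‖(2:ℝ)⁻¹‖ * 2 := by
        apply mul_lt_mul_of_pos_left this
        simp
    _ = 1 := by norm_num
end
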